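/- Suppose n − K − L > 0, and let G_B2SLS = H − (K/(n − K − L))·(M − H) be the matrix underlying the bias-corrected two-stage least squares estimator. Then tr(G_B2SLS) = 0, G_B2SLS·W = 0, and G_B2SLS·Z̃ = Z̃; consequently, under homoskedasticity, E[xᵀG_B2SLS x] = ‖ℓ̃‖² and E[yᵀG_B2SLS x] = β·‖ℓ̃‖², so the bias-corrected two-stage least squares estimator is unbiased in the ratio-of-expectations sense under homoskedastic errors. -/

import Mathlib

/-!
`G = H - K/(n-K-L) • (M - H)` annihilates `W` and fixes `Z̃` because `H` and `M` do, and it is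
traceless because `tr H = K` and `tr (M - H) = n - K - L`. Write `x = a + ν` with
`a = Z̃π + Wδ`, so that `G a = ℓ̃`. For any `f` whose `i`-th coordinate is a function of
`(εᵢ, νᵢ)`, independence across `i` and `E νⱼ = 0` kill `E[fᵢ νⱼ]` for `i ≠ j`, hence
`E[fᵀ G x] = E[f]ᵀ G a + c · tr G`, where `c` is the diagonal cross moment, which
homoskedasticity makes constant. As `tr G = 0` and `ℓ̃ ⊥ col W`, this gives `‖ℓ̃‖²` for `f = x`
and `β ‖ℓ̃‖²` for `f = y`.
-/

open MeasureTheory Matrix BigOperators ProbabilityTheory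

namespace Matrix

variable {m k 𝕜 R : Type*} [Fintype m] [Fintype k]

theorem isUnit_of_rank_eq_card [Field 𝕜] [DecidableEq m] {A : Matrix m m 𝕜}
    (h : A.rank = Fintype.card m) : IsUnit A := by
  rw [← mulVec_surjective_iff_isUnit]
  have hrange : LinearMap.range A.mulVecLin = ⊤ :=
    Submodule.eq_top_of_finrank_eq (by simpa [Matrix.rank] using h)
  intro v
  simpa using LinearMap.range_eq_top.mp hrange v

theorem mulVec_dotProduct_mulVec_eq_zero [CommRing R] {n : Type*} [Fintype n] {A : Matrix m k R}
    {B : Matrix m n R} (h : Aᵀ * B = 0) (u : k → R) (v : n → R) : A *ᵥ u ⬝ᵥ B *ᵥ v = 0 := by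
  rw [← vecMul_transpose, ← dotProduct_mulVec, mulVec_mulVec, h, zero_mulVec, dotProduct_zero]

variable [DecidableEq k]

theorem isUnit_det_transpose_mul_self_of_rank_eq_card [Field 𝕜] [LinearOrder 𝕜]
    [IsStrictOrderedRing 𝕜] {A : Matrix m k 𝕜} (h : A.rank = Fintype.card k) :
    IsUnit (Aᵀ * A).det :=
  (isUnit_iff_isUnit_det _).mp (isUnit_of_rank_eq_card (by rwa [rank_transpose_mul_self]))

variable [CommRing R]

noncomputable def colSpaceProj (A : Matrix m k R) : Matrix m m R := A * (Aᵀ * A)⁻¹ * Aᵀ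

theorem colSpaceProj_mul_self {A : Matrix m k R} (h : IsUnit (Aᵀ * A).det) :
    colSpaceProj A * A = A := by
  rw [colSpaceProj, Matrix.mul_assoc, Matrix.mul_assoc, nonsing_inv_mul _ h, Matrix.mul_one]

theorem colSpaceProj_mul_eq_zero {n : Type*} [Fintype n] {A : Matrix m k R} {B : Matrix m n R}
    (h : Aᵀ * B = 0) : colSpaceProj A * B = 0 := by
  rw [colSpaceProj, Matrix.mul_assoc, h, Matrix.mul_zero]

theorem trace_colSpaceProj {A : Matrix m k R} (h : IsUnit (Aᵀ * A).det) :
    (colSpaceProj A).trace = Fintype.card k := by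
  rw [colSpaceProj, trace_mul_comm, ← Matrix.mul_assoc, mul_nonsing_inv _ h, trace_one]

variable {l : Type*} [Fintype l] [DecidableEq l] [DecidableEq m] [Field 𝕜]

noncomputable def b2slsMatrix (W : Matrix m l 𝕜) (Z : Matrix m k 𝕜) : Matrix m m 𝕜 :=
  colSpaceProj Z - ((Fintype.card k : 𝕜) / (Fintype.card m - Fintype.card k - Fintype.card l)) •
    ((1 - colSpaceProj W) - colSpaceProj Z)

theorem trace_b2slsMatrix [CharZero 𝕜] {W : Matrix m l 𝕜} {Z : Matrix m k 𝕜}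
    (hW : IsUnit (Wᵀ * W).det) (hZ : IsUnit (Zᵀ * Z).det)
    (hcard : Fintype.card k + Fintype.card l ≠ Fintype.card m) : (b2slsMatrix W Z).trace = 0 := by
  have htr : ((1 - colSpaceProj W) - colSpaceProj Z).trace
      = Fintype.card m - Fintype.card k - Fintype.card l := by
    rw [trace_sub, trace_sub, trace_one, trace_colSpaceProj hW, trace_colSpaceProj hZ]
    ring
  have hne : (Fintype.card m : 𝕜) - Fintype.card k - Fintype.card l ≠ 0 := by
    rw [sub_sub, sub_ne_zero]
    exact_mod_cast hcard.symm
  rw [b2slsMatrix, trace_sub, trace_smul, htr, trace_colSpaceProj hZ, smul_eq_mul,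
    div_mul_cancel₀ _ hne, sub_self]

theorem b2slsMatrix_mul_left {W : Matrix m l 𝕜} {Z : Matrix m k 𝕜}
    (hW : IsUnit (Wᵀ * W).det) (hWZ : Wᵀ * Z = 0) : b2slsMatrix W Z * W = 0 := by
  have hZW : Zᵀ * W = 0 := by simpa [transpose_mul] using congrArg transpose hWZ
  rw [b2slsMatrix, Matrix.sub_mul, Matrix.smul_mul, Matrix.sub_mul, Matrix.sub_mul,
    Matrix.one_mul, colSpaceProj_mul_self hW, colSpaceProj_mul_eq_zero hZW, sub_self, sub_zero,
    smul_zero, sub_zero]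

theorem b2slsMatrix_mul_right {W : Matrix m l 𝕜} {Z : Matrix m k 𝕜}
    (hZ : IsUnit (Zᵀ * Z).det) (hWZ : Wᵀ * Z = 0) : b2slsMatrix W Z * Z = Z := by
  rw [b2slsMatrix, Matrix.sub_mul, Matrix.smul_mul, Matrix.sub_mul, Matrix.sub_mul,
    Matrix.one_mul, colSpaceProj_mul_self hZ, colSpaceProj_mul_eq_zero hWZ, sub_zero, sub_self,
    smul_zero, sub_zero]

end Matrix

section Expectation

variable {Ω ι : Type*} [MeasurableSpace Ω] {μ : Measure Ω} [Fintype ι]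

theorem integral_dotProduct_mulVec (G : Matrix ι ι ℝ) {f g : Ω → ι → ℝ}
    (hfg : ∀ i j, Integrable (fun ω => f ω i * g ω j) μ) :
    ∫ ω, f ω ⬝ᵥ (G *ᵥ g ω) ∂μ = ∑ i, ∑ j, G i j * ∫ ω, f ω i * g ω j ∂μ := by
  have hexpand : ∀ ω, f ω ⬝ᵥ (G *ᵥ g ω) = ∑ i, ∑ j, G i j * (f ω i * g ω j) := fun ω => by
    simp only [dotProduct, mulVec, Finset.mul_sum]
    exact Finset.sum_congr rfl fun i _ => Finset.sum_congr rfl fun j _ => by ring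
  simp_rw [hexpand]
  rw [integral_finsetSum (f := fun i ω => ∑ j, G i j * (f ω i * g ω j)) _
    fun i _ => integrable_finsetSum _ fun j _ => (hfg i j).const_mul _]
  refine Finset.sum_congr rfl fun i _ => ?_
  rw [integral_finsetSum _ fun j _ => (hfg i j).const_mul _]
  simp_rw [integral_const_mul]

theorem integral_dotProduct_mulVec_add [DecidableEq ι] [IsFiniteMeasure μ] (G : Matrix ι ι ℝ)
    {f ν : Ω → ι → ℝ} (a : ι → ℝ) {c : ℝ}
    (hf : ∀ i, MemLp (fun ω => f ω i) 2 μ) (hν : ∀ i, MemLp (fun ω => ν ω i) 2 μ)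
    (hcross : ∀ i j, ∫ ω, f ω i * ν ω j ∂μ = if i = j then c else 0) :
    ∫ ω, f ω ⬝ᵥ (G *ᵥ (a + ν ω)) ∂μ = (fun i => ∫ ω, f ω i ∂μ) ⬝ᵥ (G *ᵥ a) + c * G.trace := by
  have hg : ∀ j, MemLp (fun ω => (a + ν ω) j) 2 μ := fun j => (memLp_const (a j)).add (hν j)
  have hmoment : ∀ i j, ∫ ω, f ω i * (a + ν ω) j ∂μ
      = (∫ ω, f ω i ∂μ) * a j + if i = j then c else 0 := fun i j => by
    simp only [Pi.add_apply, mul_add]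
    have hfν : Integrable (fun ω => f ω i * ν ω j) μ := (hf i).integrable_mul (hν j)
    rw [integral_add ((hf i).integrable one_le_two |>.mul_const _) hfν, integral_mul_const, hcross]
  rw [integral_dotProduct_mulVec G fun i j => (hf i).integrable_mul (hg j)]
  simp only [hmoment, dotProduct, mulVec, trace, diag, mul_add, Finset.sum_add_distrib, mul_ite,
    mul_zero, Finset.sum_ite_eq, Finset.mem_univ, if_true, Finset.mul_sum]
  congr 1
  · exact Finset.sum_congr rfl fun i _ => Finset.sum_congr rfl fun j _ => by ring
  · exact Finset.sum_congr rfl fun i _ => by ring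

end Expectation

section LinearModel

variable {Ω ι : Type*} [MeasurableSpace Ω] {μ : Measure Ω} {ε ν : Ω → ι → ℝ}

theorem integral_mul_eq_ite_of_iIndepFun [DecidableEq ι]
    (hindep : iIndepFun (fun i ω => (ε ω i, ν ω i)) μ)
    (hνmean : ∀ i, ∫ ω, ν ω i ∂μ = 0) {f : Ω → ι → ℝ} {φ : ι → ℝ × ℝ → ℝ}
    (hφ : ∀ i, Measurable (φ i)) (hfφ : ∀ ω i, f ω i = φ i (ε ω i, ν ω i))
    (hf : ∀ i, AEStronglyMeasurable (fun ω => f ω i) μ)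
    (hν : ∀ i, AEStronglyMeasurable (fun ω => ν ω i) μ) (i j : ι) :
    ∫ ω, f ω i * ν ω j ∂μ = if i = j then ∫ ω, f ω i * ν ω i ∂μ else 0 := by
  split_ifs with hij
  · rw [hij]
  have hfi : (fun ω => f ω i) = φ i ∘ fun ω => (ε ω i, ν ω i) := funext fun ω => hfφ ω i
  have hindep_ij : IndepFun (fun ω => f ω i) (fun ω => ν ω j) μ :=
    hfi ▸ (hindep.indepFun hij).comp (hφ i) measurable_snd
  rw [hindep_ij.integral_fun_mul_eq_mul_integral (hf i) (hν j), hνmean, mul_zero]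

theorem integral_treatment_mul_noise [DecidableEq ι] [IsFiniteMeasure μ]
    (hindep : iIndepFun (fun i ω => (ε ω i, ν ω i)) μ)
    (hν : ∀ i, MemLp (fun ω => ν ω i) 2 μ) (hνmean : ∀ i, ∫ ω, ν ω i ∂μ = 0) {σ : ℝ}
    (hνvar : ∀ i, ∫ ω, ν ω i ^ 2 ∂μ = σ) (a : ι → ℝ) (i j : ι) :
    ∫ ω, (a + ν ω) i * ν ω j ∂μ = if i = j then σ else 0 := by
  rw [integral_mul_eq_ite_of_iIndepFun hindep hνmean (f := fun ω => a + ν ω)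
    (φ := fun i p => a i + p.2)
    (fun i => measurable_const.add measurable_snd) (fun _ _ => rfl)
    (fun i => ((memLp_const (a i)).add (hν i)).aestronglyMeasurable)
    (fun i => (hν i).aestronglyMeasurable)]
  congr 1
  have hνν : Integrable (fun ω => ν ω i * ν ω i) μ := (hν i).integrable_mul (hν i)
  simp only [Pi.add_apply, add_mul]
  rw [integral_add ((hν i).integrable one_le_two |>.const_mul _) hνν, integral_const_mul,
    hνmean, ← hνvar i]
  simp [sq]

theorem integral_outcome_mul_noise [DecidableEq ι] [IsFiniteMeasure μ]
    (hindep : iIndepFun (fun i ω => (ε ω i, ν ω i)) μ)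
    (hε : ∀ i, MemLp (fun ω => ε ω i) 2 μ) (hν : ∀ i, MemLp (fun ω => ν ω i) 2 μ)
    (hνmean : ∀ i, ∫ ω, ν ω i ∂μ = 0) {σ σεν : ℝ}
    (hνvar : ∀ i, ∫ ω, ν ω i ^ 2 ∂μ = σ) (hεν : ∀ i, ∫ ω, ε ω i * ν ω i ∂μ = σεν)
    (a : ι → ℝ) (β : ℝ) (i j : ι) :
    ∫ ω, (β • (a + ν ω) + ε ω) i * ν ω j ∂μ = if i = j then β * σ + σεν else 0 := by
  rw [integral_mul_eq_ite_of_iIndepFun hindep hνmean (f := fun ω => β • (a + ν ω) + ε ω)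
    (φ := fun i p => β * (a i + p.2) + p.1)
    (fun i => (measurable_const.add measurable_snd).const_mul β |>.add measurable_fst)
    (fun _ _ => rfl)
    (fun i => (((memLp_const (a i)).add (hν i)).const_mul β |>.add (hε i)).aestronglyMeasurable)
    (fun i => (hν i).aestronglyMeasurable)]
  congr 1
  have hxν : Integrable (fun ω => (a + ν ω) i * ν ω i) μ :=
    ((memLp_const (a i)).add (hν i)).integrable_mul (hν i)
  have hεν_int : Integrable (fun ω => ε ω i * ν ω i) μ := (hε i).integrable_mul (hν i)
  have hsplit : ∀ ω, (β • (a + ν ω) + ε ω) i * ν ω i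
      = β * ((a + ν ω) i * ν ω i) + ε ω i * ν ω i := fun ω => by
    simp only [Pi.add_apply, Pi.smul_apply, smul_eq_mul]
    ring
  simp_rw [hsplit]
  rw [integral_add (hxν.const_mul β) hεν_int, integral_const_mul, hεν,
    integral_treatment_mul_noise hindep hν hνmean hνvar, if_pos rfl]

theorem integral_treatment_apply [IsProbabilityMeasure μ]
    (hν : ∀ i, Integrable (fun ω => ν ω i) μ)
    (hνmean : ∀ i, ∫ ω, ν ω i ∂μ = 0) (a : ι → ℝ) (i : ι) : ∫ ω, (a + ν ω) i ∂μ = a i := by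
  simp only [Pi.add_apply]
  rw [integral_add (integrable_const _) (hν i), hνmean, integral_const, probReal_univ, one_smul,
    add_zero]

theorem integral_treatment_quadForm [IsProbabilityMeasure μ] [Fintype ι] [DecidableEq ι]
    (G : Matrix ι ι ℝ) (hindep : iIndepFun (fun i ω => (ε ω i, ν ω i)) μ)
    (hν : ∀ i, MemLp (fun ω => ν ω i) 2 μ) (hνmean : ∀ i, ∫ ω, ν ω i ∂μ = 0) {σ : ℝ}
    (hνvar : ∀ i, ∫ ω, ν ω i ^ 2 ∂μ = σ) (a : ι → ℝ) :
    ∫ ω, (a + ν ω) ⬝ᵥ (G *ᵥ (a + ν ω)) ∂μ = a ⬝ᵥ (G *ᵥ a) + σ * G.trace := by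
  have hx : ∀ i, MemLp (fun ω => (a + ν ω) i) 2 μ := fun i => (memLp_const (a i)).add (hν i)
  rw [integral_dotProduct_mulVec_add G a hx hν
    (integral_treatment_mul_noise hindep hν hνmean hνvar a)]
  congr 2
  exact funext (integral_treatment_apply (fun i => (hν i).integrable one_le_two) hνmean a)

theorem integral_outcome_bilinForm [IsProbabilityMeasure μ] [Fintype ι] [DecidableEq ι]
    (G : Matrix ι ι ℝ) (hindep : iIndepFun (fun i ω => (ε ω i, ν ω i)) μ)
    (hε : ∀ i, MemLp (fun ω => ε ω i) 2 μ) (hν : ∀ i, MemLp (fun ω => ν ω i) 2 μ)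
    (hνmean : ∀ i, ∫ ω, ν ω i ∂μ = 0) {σ σεν : ℝ}
    (hνvar : ∀ i, ∫ ω, ν ω i ^ 2 ∂μ = σ) (hεν : ∀ i, ∫ ω, ε ω i * ν ω i ∂μ = σεν)
    (a : ι → ℝ) (β : ℝ) :
    ∫ ω, (β • (a + ν ω) + ε ω) ⬝ᵥ (G *ᵥ (a + ν ω)) ∂μ
      = (β • a + fun i => ∫ ω, ε ω i ∂μ) ⬝ᵥ (G *ᵥ a) + (β * σ + σεν) * G.trace := by
  have hx : ∀ i, MemLp (fun ω => (a + ν ω) i) 2 μ := fun i => (memLp_const (a i)).add (hν i)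
  have hy : ∀ i, MemLp (fun ω => (β • (a + ν ω) + ε ω) i) 2 μ := fun i =>
    ((hx i).const_mul β).add (hε i)
  have hmean : (fun i => ∫ ω, (β • (a + ν ω) + ε ω) i ∂μ) = β • a + fun i => ∫ ω, ε ω i ∂μ :=
    funext fun i => by
      have hsplit : ∀ ω, (β • (a + ν ω) + ε ω) i = β * (a + ν ω) i + ε ω i := fun _ => rfl
      have hxi : Integrable (fun ω => (a + ν ω) i) μ := (hx i).integrable one_le_two
      simp_rw [hsplit]
      rw [integral_add (hxi.const_mul β) ((hε i).integrable one_le_two), integral_const_mul,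
        integral_treatment_apply (fun i => (hν i).integrable one_le_two) hνmean]
      rfl
  rw [integral_dotProduct_mulVec_add G a hy hν
    (integral_outcome_mul_noise hindep hε hν hνmean hνvar hεν a β), hmean]

end LinearModel

theorem stmt5_general
    {Ω : Type*} [MeasurableSpace Ω] (μ : Measure Ω) [IsProbabilityMeasure μ]
    (n K L : ℕ) (hnKL : K + L < n)
    (W : Matrix (Fin n) (Fin L) ℝ) (Z : Matrix (Fin n) (Fin K) ℝ)
    (hWrank : W.rank = L) (hZrank : Z.rank = K) (hWZ : Wᵀ * Z = 0)
    (M H G : Matrix (Fin n) (Fin n) ℝ)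
    (hM : M = 1 - W * (Wᵀ * W)⁻¹ * Wᵀ)
    (hH : H = Z * (Zᵀ * Z)⁻¹ * Zᵀ)
    (hG : G = H - ((K : ℝ) / ((n : ℝ) - K - L)) • (M - H))
    (ε ν : Ω → Fin n → ℝ)
    (hindep : ProbabilityTheory.iIndepFun
      (fun i ω => (ε ω i, ν ω i)) μ)
    (hεL2 : ∀ i, MemLp (fun ω => ε ω i) 2 μ)
    (hνL2 : ∀ i, MemLp (fun ω => ν ω i) 2 μ)
    (α : Fin L → ℝ) (π : Fin K → ℝ) (δ : Fin L → ℝ) (β : ℝ)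
    (hνmean : ∀ i, ∫ ω, ν ω i ∂μ = 0)
    (hεmean : ∀ i, ∫ ω, ε ω i ∂μ = W i ⬝ᵥ α)
    (σνsq σεν : ℝ)
    (hhomν : ∀ i, ∫ ω, (ν ω i) ^ 2 ∂μ = σνsq)
    (hhomεν : ∀ i, ∫ ω, ε ω i * ν ω i ∂μ = σεν)
    (x y : Ω → Fin n → ℝ) (ℓ : Fin n → ℝ)
    (hx : ∀ ω, x ω = Z *ᵥ π + W *ᵥ δ + ν ω)
    (hℓ : ℓ = Z *ᵥ π)
    (hy : ∀ ω, y ω = β • x ω + ε ω) :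
    G.trace = 0 ∧ G * W = 0 ∧ G * Z = Z ∧
    (∫ ω, x ω ⬝ᵥ (G *ᵥ x ω) ∂μ = ℓ ⬝ᵥ ℓ) ∧
    (∫ ω, y ω ⬝ᵥ (G *ᵥ x ω) ∂μ = β * (ℓ ⬝ᵥ ℓ)) := by
  have hW : IsUnit (Wᵀ * W).det :=
    isUnit_det_transpose_mul_self_of_rank_eq_card (by rwa [Fintype.card_fin])
  have hZ : IsUnit (Zᵀ * Z).det :=
    isUnit_det_transpose_mul_self_of_rank_eq_card (by rwa [Fintype.card_fin])
  have hGb : G = b2slsMatrix W Z := by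
    rw [hG, hM, hH, b2slsMatrix, Fintype.card_fin, Fintype.card_fin, Fintype.card_fin]
    rfl
  have htrG : G.trace = 0 := hGb ▸ trace_b2slsMatrix hW hZ (by simp only [Fintype.card_fin]; omega)
  have hGW : G * W = 0 := hGb ▸ b2slsMatrix_mul_left hW hWZ
  have hGZ : G * Z = Z := hGb ▸ b2slsMatrix_mul_right hZ hWZ
  set a := Z *ᵥ π + W *ᵥ δ
  have hGa : G *ᵥ a = ℓ := by
    rw [mulVec_add, mulVec_mulVec, mulVec_mulVec, hGW, hGZ, zero_mulVec, add_zero, hℓ]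
  have haℓ : a ⬝ᵥ ℓ = ℓ ⬝ᵥ ℓ := by
    rw [add_dotProduct, hℓ, mulVec_dotProduct_mulVec_eq_zero hWZ, add_zero]
  have hεℓ : (fun i => ∫ ω, ε ω i ∂μ) ⬝ᵥ ℓ = 0 := by
    rw [funext hεmean, hℓ]
    exact mulVec_dotProduct_mulVec_eq_zero hWZ α π
  refine ⟨htrG, hGW, hGZ, ?_, ?_⟩
  · simp_rw [hx]
    rw [integral_treatment_quadForm G hindep hνL2 hνmean hhomν, hGa, htrG, mul_zero, add_zero, haℓ]
  · simp_rw [hy, hx]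
    rw [integral_outcome_bilinForm G hindep hεL2 hνL2 hνmean hhomν hhomεν, hGa, htrG, mul_zero,
      add_zero, add_dotProduct, smul_dotProduct, haℓ, hεℓ, add_zero, smul_eq_mul]

/-- With `n − K − L > 0` and `G_B2SLS = H − (K/(n − K − L))·(M − H)`, one has
`tr(G_B2SLS) = 0`, `G_B2SLS·W = 0`, `G_B2SLS·Z̃ = Z̃`, and consequently under homoskedasticity
`E[xᵀG_B2SLS x] = ‖ℓ̃‖²` and `E[yᵀG_B2SLS x] = β·‖ℓ̃‖²`. -/
theorem stmt5
    {Ω : Type*} [MeasurableSpace Ω] (μ : Measure Ω) [IsProbabilityMeasure μ]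
    (n K L : ℕ) (hn : 1 ≤ n) (hK : 1 ≤ K) (hL : 1 ≤ L) (hnKL : K + L < n)
    (W : Matrix (Fin n) (Fin L) ℝ) (Z : Matrix (Fin n) (Fin K) ℝ)
    (hWrank : W.rank = L) (hZrank : Z.rank = K) (hWZ : Wᵀ * Z = 0)
    (M H G : Matrix (Fin n) (Fin n) ℝ)
    (hM : M = 1 - W * (Wᵀ * W)⁻¹ * Wᵀ)
    (hH : H = Z * (Zᵀ * Z)⁻¹ * Zᵀ)
    (hG : G = H - ((K : ℝ) / ((n : ℝ) - K - L)) • (M - H))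
    (ε ν : Ω → Fin n → ℝ)
    (hmeas : ∀ i, Measurable (fun ω => (ε ω i, ν ω i)))
    (hindep : ProbabilityTheory.iIndepFun
      (fun i ω => (ε ω i, ν ω i)) μ)
    (hεL2 : ∀ i, MemLp (fun ω => ε ω i) 2 μ)
    (hνL2 : ∀ i, MemLp (fun ω => ν ω i) 2 μ)
    (α : Fin L → ℝ) (π : Fin K → ℝ) (δ : Fin L → ℝ) (β : ℝ)
    (hνmean : ∀ i, ∫ ω, ν ω i ∂μ = 0)
    (hεmean : ∀ i, ∫ ω, ε ω i ∂μ = W i ⬝ᵥ α)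
    (σνsq σεν : ℝ)
    (hhomν : ∀ i, ∫ ω, (ν ω i) ^ 2 ∂μ = σνsq)
    (hhomεν : ∀ i, ∫ ω, ε ω i * ν ω i ∂μ = σεν)
    (x y : Ω → Fin n → ℝ) (ℓ : Fin n → ℝ)
    (hx : ∀ ω, x ω = Z *ᵥ π + W *ᵥ δ + ν ω)
    (hℓ : ℓ = Z *ᵥ π)
    (hy : ∀ ω, y ω = β • x ω + ε ω) :
    G.trace = 0 ∧ G * W = 0 ∧ G * Z = Z ∧
    (∫ ω, x ω ⬝ᵥ (G *ᵥ x ω) ∂μ = ℓ ⬝ᵥ ℓ) ∧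
    (∫ ω, y ω ⬝ᵥ (G *ᵥ x ω) ∂μ = β * (ℓ ⬝ᵥ ℓ)) :=
  stmt5_general μ n K L hnKL W Z hWrank hZrank hWZ M H G hM hH hG ε ν hindep hεL2 hνL2 α π δ β
    hνmean hεmean σνsq σεν hhomν hhomεν x y ℓ hx hℓ hy
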